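/- Let F⟨X⟩ carry a multihomogeneous algebra norm and let A be a PI-algebra over F = ℝ or ℂ. If the completion of the normed algebra F⟨X⟩/Id(A) is nil, then A is nilpotent. -/

import Mathlib

open Filter Topology

noncomputable section

/-- The free non-unital associative algebra `F⟨X⟩` on countably many
variables `x₀, x₁, x₂, …`, realized as the semigroup algebra of the free
semigroup on `ℕ`. -/
abbrev FreeNC (F : Type*) [Field F] : Type _ := MonoidAlgebra F (FreeSemigroup ℕ)

/-- Evaluation of noncommutative polynomials: the non-unital algebra
homomorphism `F⟨X⟩ → A` sending `xᵢ` to `v i`. -/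
def evalAt {F : Type*} [Field F] {A : Type*} [NonUnitalRing A] [Module F A]
    [IsScalarTower F A A] [SMulCommClass F A A] (v : ℕ → A) :
    FreeNC F →ₙₐ[F] A :=
  MonoidAlgebra.liftMagma F (FreeSemigroup.lift v)

/-- `f ∈ F⟨X⟩` is a polynomial identity of `A` if it vanishes under every
substitution of elements of `A` for the variables. -/
def IsPolyId (F : Type*) [Field F] (A : Type*) [NonUnitalRing A] [Module F A]
    [IsScalarTower F A A] [SMulCommClass F A A] (f : FreeNC F) : Prop :=
  ∀ v : ℕ → A, evalAt v f = 0

/-- The number of occurrences of the variable `xᵢ` in the monomial (word) `w`. -/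
def degOf (w : FreeSemigroup ℕ) (i : ℕ) : ℕ := (w.head :: w.tail).count i

/- The multihomogeneous component of `f` of multidegree `d`: the sum of the
monomial terms of `f` in which `xᵢ` occurs exactly `d i` times for every `i`. -/
open scoped Classical in
def component {F : Type*} [Field F] (d : ℕ →₀ ℕ) (f : FreeNC F) : FreeNC F :=
  MonoidAlgebra.ofCoeff (Finsupp.filter (fun w => ∀ i, degOf w i = d i) f.coeff)

/-- `prodSeq f n = f 0 * f 1 * ⋯ * f n`, a product of `n + 1` elements. -/
def prodSeq {A : Type*} [Mul A] (f : ℕ → A) : ℕ → A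
  | 0 => f 0
  | n+1 => prodSeq f n * f (n+1)

/-- `word n = x₀ x₁ ⋯ xₙ`, the monomial word of length `n + 1`. -/
def word : ℕ → FreeSemigroup ℕ
  | 0 => .of 0
  | n+1 => word n * .of (n+1)

/-!
A nil Banach algebra `B` is nil of bounded index (Grabiner): by Baire, some closed set
`{b | b ^ n = 0}` contains a ball around some `b₀`, and for any `a` the polynomial
`t ↦ (b₀ + t • a) ^ n` then vanishes for all small `t`, so its top coefficient `a ^ n` is zero.
Since `Q` embeds injectively in `B`, the word `x₀ ⋯ x₀` of that length lies in the kernel of `π`,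
i.e. is an identity of `A`; thus `A` is nil of bounded index.

Nilpotency then follows from the Nagata–Higman theorem, proved inside the unitization for the
augmentation ideal `S`. Let `J m` be the ideal generated by the `m`-th powers of elements of `S`.
Linearizing `(x + t • q) ^ (m + 1) ∈ J (m + 1)` in `t` gives `∑ xⁱ q x^(m-i) ∈ J (m + 1)`, and
combining three such sums yields Higman's lemma `(m + 1) • x^m w y^m ∈ J (m + 1)`. Hence
`J m * S * J m ⊆ J (m + 1)`, and by induction every product of `2 ^ m - 1` elements of `S`
lies in `J m`.
-/

theorem prodSeq_const_eq_pow {M : Type*} [Monoid M] (x : M) (n : ℕ) :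
    prodSeq (fun _ => x) n = x ^ (n + 1) := by
  induction n with
  | zero => exact (pow_one x).symm
  | succ n ih => rw [prodSeq, ih, pow_succ _ (n + 1)]

theorem map_prodSeq {M N G : Type*} [Mul M] [Mul N] [FunLike G M N] [MulHomClass G M N] (φ : G)
    (f : ℕ → M) (n : ℕ) : φ (prodSeq f n) = prodSeq (fun i => φ (f i)) n := by
  induction n with
  | zero => rfl
  | succ n ih => rw [prodSeq, map_mul, ih, prodSeq]

theorem continuous_prodSeq_const {M : Type*} [TopologicalSpace M] [Mul M] [ContinuousMul M]
    (n : ℕ) : Continuous fun x : M => prodSeq (fun _ => x) n := by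
  induction n with
  | zero => exact continuous_id
  | succ n ih => exact ih.mul continuous_id

theorem prodSeq_add_add_one {M : Type*} [Semigroup M] (f : ℕ → M) (a b : ℕ) :
    prodSeq f (a + b + 1) = prodSeq f a * prodSeq (fun i => f (a + 1 + i)) b := by
  induction b with
  | zero => rfl
  | succ b ih =>
    rw [← add_assoc, prodSeq, ih, prodSeq, mul_assoc,
      show a + 1 + (b + 1) = a + b + 1 + 1 by omega]

section PolynomialVanishing

variable {F M : Type*} [Field F] [AddCommGroup M] [Module F M]

theorem eq_zero_of_forall_sum_pow_smul_eq_zero {S : Set F} (hS : S.Infinite) {d : ℕ}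
    {c : ℕ → M} (h : ∀ t ∈ S, ∑ k ∈ Finset.range d, t ^ k • c k = 0) {k : ℕ} (hk : k < d) :
    c k = 0 := by
  rw [← Module.forall_dual_apply_eq_zero_iff F (c k)]
  intro φ
  set p : Polynomial F := ∑ j ∈ Finset.range d, Polynomial.monomial j (φ (c j))
  have hroots : S ⊆ {t | p.IsRoot t} := fun t ht => by
    simpa [p, Polynomial.eval_finsetSum, mul_comm] using congrArg φ (h t ht)
  have hp : p = 0 := Polynomial.eq_zero_of_infinite_isRoot p (hS.mono hroots)
  simpa [p, Polynomial.finsetSum_coeff, Polynomial.coeff_monomial, hk] using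
    congrArg (Polynomial.coeff · k) hp

theorem mem_of_forall_sum_pow_smul_mem (W : Submodule F M) {S : Set F} (hS : S.Infinite)
    {d : ℕ} {c : ℕ → M} (h : ∀ t ∈ S, ∑ k ∈ Finset.range d, t ^ k • c k ∈ W) {k : ℕ}
    (hk : k < d) : c k ∈ W := by
  rw [← Submodule.Quotient.mk_eq_zero]
  refine eq_zero_of_forall_sum_pow_smul_eq_zero (c := fun k => W.mkQ (c k)) hS
    (fun t ht => ?_) hk
  simp_rw [← map_smul, ← map_sum, Submodule.mkQ_apply, Submodule.Quotient.mk_eq_zero]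
  exact h t ht

end PolynomialVanishing

section Expansion

variable {F R : Type*} [CommSemiring F] [Ring R] [Algebra F R]

/-- `addSMulPowCoeff z q μ k` is the coefficient of `t ^ k` in `(z + t • q) ^ μ`. -/
def addSMulPowCoeff (z q : R) : ℕ → ℕ → R
  | 0, 0 => 1
  | 0, _ + 1 => 0
  | μ + 1, 0 => addSMulPowCoeff z q μ 0 * z
  | μ + 1, k + 1 => addSMulPowCoeff z q μ (k + 1) * z + addSMulPowCoeff z q μ k * q

variable (z q : R)

theorem addSMulPowCoeff_zero (μ : ℕ) : addSMulPowCoeff z q μ 0 = z ^ μ := by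
  induction μ with
  | zero => exact (pow_zero z).symm
  | succ μ ih => rw [addSMulPowCoeff, ih, pow_succ]

theorem addSMulPowCoeff_of_lt {μ k : ℕ} (h : μ < k) : addSMulPowCoeff z q μ k = 0 := by
  induction μ generalizing k with
  | zero => obtain ⟨k, rfl⟩ := Nat.exists_eq_add_of_lt h; rfl
  | succ μ ih =>
    obtain ⟨k, rfl⟩ := Nat.exists_eq_add_of_lt h
    rw [addSMulPowCoeff, ih (by omega), ih (by omega), zero_mul, zero_mul, add_zero]

theorem addSMulPowCoeff_self (μ : ℕ) : addSMulPowCoeff z q μ μ = q ^ μ := by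
  induction μ with
  | zero => exact (pow_zero q).symm
  | succ μ ih =>
    rw [addSMulPowCoeff, ih, addSMulPowCoeff_of_lt z q μ.lt_succ_self, zero_mul, zero_add,
      pow_succ]

theorem addSMulPowCoeff_one (μ : ℕ) :
    addSMulPowCoeff z q μ 1 = ∑ i ∈ Finset.range μ, z ^ i * q * z ^ (μ - 1 - i) := by
  induction μ with
  | zero => rfl
  | succ μ ih =>
    rw [addSMulPowCoeff, ih, addSMulPowCoeff_zero, Finset.sum_range_succ, Finset.sum_mul,
      Nat.add_sub_cancel, Nat.sub_self, pow_zero, mul_one]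
    congr 1
    refine Finset.sum_congr rfl fun i hi => ?_
    rw [mul_assoc, ← pow_succ]
    congr 2
    simp only [Finset.mem_range] at hi
    omega

theorem add_smul_pow_eq_sum (t : F) (μ : ℕ) :
    (z + t • q) ^ μ = ∑ k ∈ Finset.range (μ + 1), t ^ k • addSMulPowCoeff z q μ k := by
  induction μ with
  | zero => simp [addSMulPowCoeff]
  | succ μ ih =>
    have hshift : ∑ k ∈ Finset.range (μ + 1), t ^ k • (addSMulPowCoeff z q μ k * z) =
        ∑ k ∈ Finset.range (μ + 1), t ^ (k + 1) • (addSMulPowCoeff z q μ (k + 1) * z) +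
          addSMulPowCoeff z q μ 0 * z := by
      rw [Finset.sum_range_succ (fun k => t ^ (k + 1) • _),
        addSMulPowCoeff_of_lt z q μ.lt_succ_self, zero_mul, smul_zero, add_zero,
        Finset.sum_range_succ', pow_zero, one_smul]
    simp_rw [pow_succ _ μ, ih, Finset.sum_mul, mul_add, smul_mul_assoc, mul_smul_comm, smul_smul,
      ← pow_succ, Finset.sum_add_distrib, hshift, Finset.sum_range_succ' _ (μ + 1), addSMulPowCoeff,
      smul_add, Finset.sum_add_distrib, pow_zero, one_smul]
    abel

end Expansion

theorem higman_identity {R : Type*} [Ring R] (x y w : R) (m : ℕ) :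
    ∑ j ∈ Finset.range m,
        (∑ i ∈ Finset.range (m + 1), x ^ i * (w * y ^ j) * x ^ (m - i)) * y ^ (m - j)
      - ∑ i ∈ Finset.range m,
        x ^ i * w * ∑ j ∈ Finset.range (m + 1), y ^ j * x ^ (m - i) * y ^ (m - j)
      + ∑ i ∈ Finset.range (m + 1), x ^ i * (w * y ^ m) * x ^ (m - i)
      = (m + 1) • (x ^ m * w * y ^ m) := by
  have hy : ∀ j ∈ Finset.range m, x ^ m * (w * y ^ j) * y ^ (m - j) = x ^ m * w * y ^ m := by
    intro j hj
    rw [mul_assoc, mul_assoc, ← pow_add, Nat.add_sub_cancel' (Finset.mem_range.mp hj).le,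
      ← mul_assoc]
  simp only [Finset.sum_range_succ _ m, Nat.sub_self, pow_zero, mul_one]
  simp only [add_mul, mul_add, Finset.sum_add_distrib, Finset.sum_mul, Finset.mul_sum]
  rw [Finset.sum_congr rfl hy, Finset.sum_comm (s := Finset.range m) (t := Finset.range m)]
  simp only [mul_assoc, Finset.sum_const, Finset.card_range, succ_nsmul]
  abel

theorem TwoSidedIdeal.smul_of_tower_mem {F R : Type*} [CommSemiring F] [Ring R] [Algebra F R]
    (I : TwoSidedIdeal R) (c : F) {x : R} (hx : x ∈ I) : c • x ∈ I := by
  rw [Algebra.smul_def]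
  exact I.mul_mem_left _ _ hx

section Linearization

variable {F R : Type*} [Field F] [Ring R] [Algebra F R]

theorem pow_eq_zero_of_forall_add_smul_pow_eq_zero {S : Set F} (hS : S.Infinite) {z q : R}
    {μ : ℕ} (h : ∀ t ∈ S, (z + t • q) ^ μ = 0) : q ^ μ = 0 := by
  rw [← addSMulPowCoeff_self z q μ]
  refine eq_zero_of_forall_sum_pow_smul_eq_zero hS (fun t ht => ?_) μ.lt_succ_self
  rw [← add_smul_pow_eq_sum, h t ht]

theorem addSMulPowCoeff_mem [Infinite F] (I : TwoSidedIdeal R) {z q : R} {μ : ℕ}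
    (h : ∀ t : F, (z + t • q) ^ μ ∈ I) {k : ℕ} (hk : k ≤ μ) : addSMulPowCoeff z q μ k ∈ I := by
  refine mem_of_forall_sum_pow_smul_mem (I.asIdeal.restrictScalars F) Set.infinite_univ
    (fun t _ => ?_) (Nat.lt_succ_of_le hk)
  rw [← add_smul_pow_eq_sum]
  exact h t

end Linearization

def spanPow {R : Type*} [Ring R] (S : TwoSidedIdeal R) (m : ℕ) : TwoSidedIdeal R :=
  TwoSidedIdeal.span {y | ∃ x ∈ S, x ^ m = y}

section NagataHigman

variable {R : Type*} [Ring R] {S : TwoSidedIdeal R}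

theorem pow_mem_spanPow {x : R} (hx : x ∈ S) (m : ℕ) :
    x ^ m ∈ spanPow S m :=
  TwoSidedIdeal.subset_span ⟨x, hx, rfl⟩

theorem spanPow_eq_bot {m : ℕ} (h : ∀ x ∈ S, x ^ m = 0) :
    spanPow S m = ⊥ := by
  refine eq_bot_iff.mpr (TwoSidedIdeal.span_le.mpr ?_)
  rintro _ ⟨x, hx, rfl⟩
  exact (TwoSidedIdeal.mem_bot R).mpr (h x hx)

theorem sum_pow_mul_mul_pow_mem_spanPow (F : Type*) [Field F] [CharZero F] [Algebra F R]
    {x q : R} (hx : x ∈ S) (hq : q ∈ S) (m : ℕ) :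
    ∑ i ∈ Finset.range (m + 1), x ^ i * q * x ^ (m - i) ∈ spanPow S (m + 1) := by
  have h := addSMulPowCoeff_mem (spanPow S (m + 1)) (F := F)
    (fun t => pow_mem_spanPow (S.add_mem hx (S.smul_of_tower_mem t hq)) _) (k := 1) (by omega)
  simpa [addSMulPowCoeff_one] using h

theorem pow_mul_mul_pow_mem_spanPow (F : Type*) [Field F] [CharZero F] [Algebra F R]
    {x y w : R} (hx : x ∈ S) (hy : y ∈ S) (hw : w ∈ S) (m : ℕ) :
    x ^ m * w * y ^ m ∈ spanPow S (m + 1) := by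
  set J := spanPow S (m + 1)
  have hT {a q : R} (ha : a ∈ S) (hq : q ∈ S) :
      ∑ i ∈ Finset.range (m + 1), a ^ i * q * a ^ (m - i) ∈ J :=
    sum_pow_mul_mul_pow_mem_spanPow F ha hq m
  have h₁ := J.finsetSum_mem (Finset.range m)
    (fun j => (∑ i ∈ Finset.range (m + 1), x ^ i * (w * y ^ j) * x ^ (m - i)) * y ^ (m - j))
    fun j _ => J.mul_mem_right _ _ (hT hx (S.mul_mem_right w (y ^ j) hw))
  have h₂ := J.finsetSum_mem (Finset.range m)
    (fun i => x ^ i * w * ∑ j ∈ Finset.range (m + 1), y ^ j * x ^ (m - i) * y ^ (m - j))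
    fun i hi => by
      refine J.mul_mem_left _ _ (hT hy ?_)
      rw [← Nat.sub_add_cancel (Nat.sub_pos_of_lt (Finset.mem_range.mp hi)), pow_succ]
      exact S.mul_mem_left _ x hx
  have h₃ := hT hx (S.mul_mem_right w (y ^ m) hw)
  have hsmul : (m + 1) • (x ^ m * w * y ^ m) ∈ J := by
    rw [← higman_identity]
    exact J.add_mem (J.sub_mem h₁ h₂) h₃
  have hunit : ((m + 1 : ℕ) : F) ≠ 0 := Nat.cast_ne_zero.mpr m.succ_ne_zero
  rw [← Nat.cast_smul_eq_nsmul F] at hsmul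
  have h := J.smul_of_tower_mem ((m + 1 : ℕ) : F)⁻¹ hsmul
  rwa [smul_smul, inv_mul_cancel₀ hunit, one_smul] at h

theorem pow_mul_mul_mem_spanPow_succ (F : Type*) [Field F] [CharZero F] [Algebra F R] {m : ℕ}
    {x p : R} (hx : x ∈ S) (hp : p ∈ spanPow S m) :
    ∀ c ∈ S, x ^ m * c * p ∈ spanPow S (m + 1) := by
  set J := spanPow S (m + 1)
  induction hp using TwoSidedIdeal.span_induction with
  | mem _ h =>
    obtain ⟨y, hy, rfl⟩ := h
    exact fun c hc => pow_mul_mul_pow_mem_spanPow F hx hy hc m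
  | zero => simp [J.zero_mem]
  | add _ _ _ _ hp hq => exact fun c hc => by rw [mul_add]; exact J.add_mem (hp c hc) (hq c hc)
  | neg _ _ hp => exact fun c hc => by rw [mul_neg]; exact J.neg_mem (hp c hc)
  | left_absorb a _ _ hp =>
    exact fun c hc => by simpa only [mul_assoc] using hp _ (S.mul_mem_right c a hc)
  | right_absorb b _ _ hp =>
    exact fun c hc => by simpa only [mul_assoc] using J.mul_mem_right _ b (hp c hc)

theorem mul_mul_mem_spanPow_succ (F : Type*) [Field F] [CharZero F] [Algebra F R] {m : ℕ}
    {p q : R} (hp : p ∈ spanPow S m) (hq : q ∈ spanPow S m) :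
    ∀ c ∈ S, p * c * q ∈ spanPow S (m + 1) := by
  set J := spanPow S (m + 1)
  induction hp using TwoSidedIdeal.span_induction with
  | mem _ h =>
    obtain ⟨x, hx, rfl⟩ := h
    exact pow_mul_mul_mem_spanPow_succ F hx hq
  | zero => simp [J.zero_mem]
  | add _ _ _ _ hp hp' =>
    exact fun c hc => by rw [add_mul, add_mul]; exact J.add_mem (hp c hc) (hp' c hc)
  | neg _ _ hp => exact fun c hc => by rw [neg_mul, neg_mul]; exact J.neg_mem (hp c hc)
  | left_absorb a _ _ hp =>
    exact fun c hc => by simpa only [mul_assoc] using J.mul_mem_left a _ (hp c hc)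
  | right_absorb b _ _ hp =>
    exact fun c hc => by simpa only [mul_assoc] using hp _ (S.mul_mem_left b c hc)

theorem prodSeq_mem_spanPow (F : Type*) [Field F] [CharZero F] [Algebra F R] {f : ℕ → R}
    (hf : ∀ i, f i ∈ S) (m : ℕ) : prodSeq f (2 ^ (m + 1) - 2) ∈ spanPow S (m + 1) := by
  induction m generalizing f with
  | zero => simpa [prodSeq] using pow_mem_spanPow (hf 0) 1
  | succ m ih =>
    set a := 2 ^ (m + 1) - 2
    have ha : 2 ^ (m + 2) - 2 = a + (0 + a + 1) + 1 := by
      have : 2 ≤ 2 ^ (m + 1) := Nat.le_self_pow m.succ_ne_zero 2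
      rw [pow_succ 2 (m + 1)]
      omega
    rw [ha, prodSeq_add_add_one, prodSeq_add_add_one, ← mul_assoc]
    exact mul_mul_mem_spanPow_succ F (ih hf) (ih fun i => hf _) _ (hf _)

end NagataHigman

theorem Unitization.inr_prodSeq {F A : Type*} [CommSemiring F] [NonUnitalSemiring A] [Module F A]
    (f : ℕ → A) (n : ℕ) :
    ((prodSeq f n : A) : Unitization F A) = prodSeq (fun i => (f i : Unitization F A)) n :=
  map_prodSeq (Unitization.inrNonUnitalAlgHom F A) f n

theorem Unitization.inr_prodSeq_const {F A : Type*} [CommSemiring F] [NonUnitalSemiring A]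
    [Module F A] [IsScalarTower F A A] [SMulCommClass F A A] (a : A) (n : ℕ) :
    ((prodSeq (fun _ => a) n : A) : Unitization F A) = (a : Unitization F A) ^ (n + 1) := by
  rw [Unitization.inr_prodSeq, prodSeq_const_eq_pow]

theorem prodSeq_eq_zero_of_forall_prodSeq_const_eq_zero {F A : Type*} [Field F] [CharZero F]
    [NonUnitalRing A] [Module F A] [IsScalarTower F A A] [SMulCommClass F A A] {n : ℕ}
    (h : ∀ a : A, prodSeq (fun _ => a) n = 0) (f : ℕ → A) : prodSeq f (2 ^ (n + 1) - 2) = 0 := by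
  set S := TwoSidedIdeal.ker (Unitization.fstHom F A)
  have hS : ∀ x ∈ S, x ^ (n + 1) = 0 := by
    intro x hx
    have hx : x.fst = 0 := (TwoSidedIdeal.mem_ker _).mp hx
    obtain ⟨a, rfl⟩ : ∃ a : A, (a : Unitization F A) = x := ⟨x.snd, by ext <;> simp [hx]⟩
    rw [← Unitization.inr_prodSeq_const, h, Unitization.inr_zero]
  have hf := prodSeq_mem_spanPow F (S := S) (f := fun i => (f i : Unitization F A))
    (fun i => (TwoSidedIdeal.mem_ker _).mpr (Unitization.fst_inr F (f i))) n
  rw [spanPow_eq_bot hS, TwoSidedIdeal.mem_bot, ← Unitization.inr_prodSeq] at hf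
  exact Unitization.inr_injective (by simpa using hf)

theorem exists_forall_prodSeq_const_eq_zero {𝕜 B : Type*} [NontriviallyNormedField 𝕜]
    [NonUnitalNormedRing B] [NormedSpace 𝕜 B] [IsScalarTower 𝕜 B B] [SMulCommClass 𝕜 B B]
    [CompleteSpace B] (hnil : ∀ b : B, ∃ n, prodSeq (fun _ => b) n = 0) :
    ∃ n, ∀ b : B, prodSeq (fun _ => b) n = 0 := by
  obtain ⟨n, b₀, hb₀⟩ := nonempty_interior_of_iUnion_of_closed
    (fun n => isClosed_eq (continuous_prodSeq_const n) continuous_const)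
    (Set.eq_univ_of_forall fun b => Set.mem_iUnion.mpr (hnil b))
  refine ⟨n, fun a => ?_⟩
  have hnhds : {t : 𝕜 | b₀ + t • a ∈ interior {b : B | prodSeq (fun _ => b) n = 0}} ∈ 𝓝 0 :=
    (continuous_const.add (continuous_id.smul continuous_const)).continuousAt.preimage_mem_nhds
      (by simpa using isOpen_interior.mem_nhds hb₀)
  have hpow : (a : Unitization 𝕜 B) ^ (n + 1) = 0 :=
    pow_eq_zero_of_forall_add_smul_pow_eq_zero (infinite_of_mem_nhds 0 hnhds)
      (z := (b₀ : Unitization 𝕜 B)) fun t ht => by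
        rw [← Unitization.inr_smul, ← Unitization.inr_add, ← Unitization.inr_prodSeq_const,
          interior_subset ht, Unitization.inr_zero]
  rw [← Unitization.inr_prodSeq_const] at hpow
  exact Unitization.inr_injective (by simpa using hpow)

def freeVar (F : Type*) [Field F] (i : ℕ) : FreeNC F :=
  MonoidAlgebra.ofMagma F _ (FreeSemigroup.of i)

theorem evalAt_freeVar {F A : Type*} [Field F] [NonUnitalRing A] [Module F A]
    [IsScalarTower F A A] [SMulCommClass F A A] (v : ℕ → A) (i : ℕ) :
    evalAt v (freeVar F i) = v i := by
  simp [evalAt, freeVar]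

theorem prodSeq_const_eq_zero_of_isPolyId {F A : Type*} [Field F] [NonUnitalRing A] [Module F A]
    [IsScalarTower F A A] [SMulCommClass F A A] {n : ℕ}
    (h : IsPolyId F A (prodSeq (fun _ => freeVar F 0) n)) (a : A) :
    prodSeq (fun _ => a) n = 0 := by
  simpa [map_prodSeq, evalAt_freeVar] using h fun _ => a

theorem stmt_13_general {F : Type*} [RCLike F]
    {A : Type*} [NonUnitalRing A] [Module F A] [IsScalarTower F A A] [SMulCommClass F A A]
    {Q : Type*} [NonUnitalNormedRing Q] [NormedSpace F Q]
    (π : FreeNC F →ₙₐ[F] Q)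
    (hker : ∀ f : FreeNC F, π f = 0 ↔ IsPolyId F A f)
    {B : Type*} [NonUnitalNormedRing B] [NormedSpace F B]
    [IsScalarTower F B B] [SMulCommClass F B B] [CompleteSpace B]
    (ι : Q →ₙₐ[F] B) (hι : Isometry ι)
    (hnil : ∀ b : B, ∃ n : ℕ, prodSeq (fun _ => b) n = 0) :
    ∃ N : ℕ, ∀ f : ℕ → A, prodSeq f N = 0 := by
  obtain ⟨n, hB⟩ := exists_forall_prodSeq_const_eq_zero (𝕜 := F) hnil
  have hQ : π (prodSeq (fun _ => freeVar F 0) n) = 0 :=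
    hι.injective (by rw [map_prodSeq, map_prodSeq, map_zero]; exact hB _)
  have hA := prodSeq_const_eq_zero_of_isPolyId ((hker _).mp hQ)
  exact ⟨_, prodSeq_eq_zero_of_forall_prodSeq_const_eq_zero (F := F) hA⟩

/-- if `F⟨X⟩` carries a multihomogeneous algebra norm, `A` is a
PI-algebra, and the completion `B` of the normed algebra `F⟨X⟩ / Id(A)`
(realized by a quotient map `π` onto `Q` with the quotient norm, and a Banach
algebra `B ⊇ Q` isometrically and densely) is nil, then `A` is nilpotent. -/
theorem stmt_13 {F : Type*} [RCLike F] [NormedAddCommGroup (FreeNC F)]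
    (hsub : ∀ f g : FreeNC F, ‖f * g‖ ≤ ‖f‖ * ‖g‖)
    (hhom : ∀ (c : F) (f : FreeNC F), ‖c • f‖ = ‖c‖ * ‖f‖)
    (hmh : ∀ (d : ℕ →₀ ℕ) (f : FreeNC F), ‖component d f‖ ≤ ‖f‖)
    {A : Type*} [NonUnitalRing A] [Module F A] [IsScalarTower F A A] [SMulCommClass F A A]
    (hPI : ∃ f : FreeNC F, f ≠ 0 ∧ IsPolyId F A f)
    {Q : Type*} [NonUnitalNormedRing Q] [NormedSpace F Q]
    [IsScalarTower F Q Q] [SMulCommClass F Q Q]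
    (π : FreeNC F →ₙₐ[F] Q) (hsurj : Function.Surjective π)
    (hker : ∀ f : FreeNC F, π f = 0 ↔ IsPolyId F A f)
    (hqnorm : ∀ f : FreeNC F,
      ‖π f‖ = sInf ((fun g => ‖f + g‖) '' {g : FreeNC F | IsPolyId F A g}))
    {B : Type*} [NonUnitalNormedRing B] [NormedSpace F B]
    [IsScalarTower F B B] [SMulCommClass F B B] [CompleteSpace B]
    (ι : Q →ₙₐ[F] B) (hι : Isometry ι) (hdense : DenseRange ι)
    (hnil : ∀ b : B, ∃ n : ℕ, prodSeq (fun _ => b) n = 0) :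
    ∃ N : ℕ, ∀ f : ℕ → A, prodSeq f N = 0 :=
  stmt_13_general π hker ι hι hnil
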